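/- Let d ≥ 2 be an integer and let (ξ_j)_{j≥0} be any sequence of unit vectors in ℝ^d. For the set K = {0} ∪ ⋃_{j≥0} T_j there exists a constant C > 0 such that N(B(0,R) ∩ K, r) ≤ C·R/r for all 0 < r < R, where B(0,R) is the closed ball of radius R centred at the origin. -/

import Mathlib

/-! Every segment `T_j` lies in the annulus `3/4 · 2⁻ʲ ≤ ‖x‖ ≤ 5/4 · 2⁻ʲ`, so `B(0,R) ∩ K`
is covered by the ball `B(0, r/2)` together with the segments with `r/4 ≤ 2⁻ʲ ≤ 2R`.
A segment of length `2⁻ʲ⁻¹` needs at most `2⁻ʲ/r + 1 ≤ 5 · 2⁻ʲ/r` sets of diameter `r`,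
and the relevant `2⁻ʲ` are distinct powers of `1/2` bounded by `2R`, so they sum to at
most `4R`. Hence `N(B(0,R) ∩ K, r) ≤ 1 + 20 R/r ≤ 21 R/r`. -/

open Metric Set

/-- `P` is an arithmetic patch of size `k` and scale `Δ` with orientation `e : Fin m → ℝ^d`. -/
def IsAPatch {d : ℕ} (m k : ℕ) (Δ : ℝ) (e : Fin m → EuclideanSpace ℝ (Fin d))
    (P : Set (EuclideanSpace ℝ (Fin d))) : Prop :=
  ∃ t : EuclideanSpace ℝ (Fin d),
    P = {p | ∃ x : Fin m → Fin k, p = t + Δ • ∑ i, ((x i : ℕ) : ℝ) • e i}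

/-- `Q` is a `(k, ε, {e₁,…,eₘ})`-AP with approximating arithmetic patch of scale `Δ`. -/
def IsAPScale {d : ℕ} (m k : ℕ) (ε Δ : ℝ) (e : Fin m → EuclideanSpace ℝ (Fin d))
    (Q : Set (EuclideanSpace ℝ (Fin d))) : Prop :=
  0 < Δ ∧ ∃ P : Set (EuclideanSpace ℝ (Fin d)), IsAPatch m k Δ e P ∧
    Q.ncard = P.ncard ∧ ∀ x ∈ P, Metric.infDist x Q ≤ ε * Δ

/-- `Q` is a `(k, ε, {e₁,…,eₘ})`-AP. -/
def IsAP {d : ℕ} (m k : ℕ) (ε : ℝ) (e : Fin m → EuclideanSpace ℝ (Fin d))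
    (Q : Set (EuclideanSpace ℝ (Fin d))) : Prop :=
  ∃ Δ : ℝ, IsAPScale m k ε Δ e Q

/-- `N(E, r)`: the smallest number of open sets of diameter at most `r` needed to cover `E`. -/
noncomputable def coverNumber {X : Type*} [MetricSpace X] (E : Set X) (r : ℝ) : ℕ :=
  sInf {n : ℕ | ∃ 𝒰 : Finset (Set X), 𝒰.card = n ∧
    (∀ U ∈ 𝒰, IsOpen U ∧ Metric.diam U ≤ r) ∧ E ⊆ ⋃₀ ↑𝒰}

/-- The Assouad dimension of `F`. -/
noncomputable def assouadDim {X : Type*} [MetricSpace X] (F : Set X) : ℝ :=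
  sInf {σ : ℝ | 0 ≤ σ ∧ ∃ C > 0, ∀ x ∈ F, ∀ R > 0, ∀ r ∈ Set.Ioo 0 R,
    (coverNumber (Metric.closedBall x R ∩ F) r : ℝ) ≤ C * (R / r) ^ σ}

/-- `ℓ({e₁,…,eₘ})`: the minimum of `‖ω₁e₁ + ⋯ + ωₘeₘ‖` over `ω ∈ {0,1}^m \ {0}`. -/
noncomputable def ellOf {d m : ℕ} (e : Fin m → EuclideanSpace ℝ (Fin d)) : ℝ :=
  sInf {l : ℝ | ∃ ω : Fin m → Bool, ω ≠ (fun _ => false) ∧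
    l = ‖∑ i, if ω i then e i else (0 : EuclideanSpace ℝ (Fin d))‖}

/-- `F` asymptotically and omnidirectionally contains arithmetic progressions. -/
def AsympOmniContainsAPs {d : ℕ} (F : Set (EuclideanSpace ℝ (Fin d))) : Prop :=
  ∀ k : ℕ, 3 ≤ k → ∀ ε ∈ Set.Ioo (0 : ℝ) 1, ∀ e : EuclideanSpace ℝ (Fin d), ‖e‖ = 1 →
    ∃ Q ⊆ F, IsAP 1 k ε (fun _ => e) Q

/-- The first standard basis vector `e₁ = (1,0,…,0)` of `ℝ^d`. -/
noncomputable def stdE₁ (d : ℕ) : EuclideanSpace ℝ (Fin d) :=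
  (EuclideanSpace.equiv (Fin d) ℝ).symm (fun i => if (i : ℕ) = 0 then 1 else 0)

/-- The segment `T_j = {t ξ_j + 2⁻ʲ e₁ : t ∈ [-2^{-(j+2)}, 2^{-(j+2)}]}`. -/
noncomputable def Tseg {d : ℕ} (ξ : ℕ → EuclideanSpace ℝ (Fin d)) (j : ℕ) :
    Set (EuclideanSpace ℝ (Fin d)) :=
  (fun t : ℝ => t • ξ j + ((1 : ℝ) / 2 ^ j) • stdE₁ d) ''
    Set.Icc (-((1 : ℝ) / 2 ^ (j + 2))) ((1 : ℝ) / 2 ^ (j + 2))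

/-- `K = {0} ∪ ⋃_j T_j`. -/
noncomputable def Kset {d : ℕ} (ξ : ℕ → EuclideanSpace ℝ (Fin d)) :
    Set (EuclideanSpace ℝ (Fin d)) :=
  {0} ∪ ⋃ j : ℕ, Tseg ξ j

/-- The diamond `D_j = {t₁ξ_{1j} + ⋯ + tₘξ_{mj} + 2⁻ʲ e₁ : tᵢ ∈ [-1/(m 2^{j+2}), 1/(m 2^{j+2})]}`. -/
noncomputable def Dcell {d : ℕ} (m : ℕ) (ξ : ℕ → Fin m → EuclideanSpace ℝ (Fin d)) (j : ℕ) :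
    Set (EuclideanSpace ℝ (Fin d)) :=
  (fun t : Fin m → ℝ => (∑ i, t i • ξ j i) + ((1 : ℝ) / 2 ^ j) • stdE₁ d) ''
    {t | ∀ i, t i ∈ Set.Icc (-(1 / ((m : ℝ) * 2 ^ (j + 2)))) (1 / ((m : ℝ) * 2 ^ (j + 2)))}

/-- `K = {0} ∪ ⋃_j D_j`. -/
noncomputable def KsetD {d : ℕ} (m : ℕ) (ξ : ℕ → Fin m → EuclideanSpace ℝ (Fin d)) :
    Set (EuclideanSpace ℝ (Fin d)) :=
  {0} ∪ ⋃ j : ℕ, Dcell m ξ j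

section FineCover

variable {X : Type*} [MetricSpace X] {r : ℝ}

def IsFineOpenCover (r : ℝ) (𝒰 : Finset (Set X)) (E : Set X) : Prop :=
  (∀ U ∈ 𝒰, IsOpen U ∧ diam U ≤ r) ∧ E ⊆ ⋃₀ ↑𝒰

theorem coverNumber_le_card {𝒰 : Finset (Set X)} {E : Set X} (h : IsFineOpenCover r 𝒰 E) :
    coverNumber E r ≤ 𝒰.card :=
  Nat.sInf_le ⟨𝒰, rfl, h⟩

namespace IsFineOpenCover

variable {𝒰 𝒱 : Finset (Set X)} {E F : Set X}

theorem mono (h : IsFineOpenCover r 𝒰 E) (hFE : F ⊆ E) : IsFineOpenCover r 𝒰 F :=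
  ⟨h.1, hFE.trans h.2⟩

theorem union [DecidableEq (Set X)] (h𝒰 : IsFineOpenCover r 𝒰 E) (h𝒱 : IsFineOpenCover r 𝒱 F) :
    IsFineOpenCover r (𝒰 ∪ 𝒱) (E ∪ F) := by
  refine ⟨fun U hU => ?_, ?_⟩
  · rcases Finset.mem_union.1 hU with hU | hU
    exacts [h𝒰.1 U hU, h𝒱.1 U hU]
  · rw [Finset.coe_union, sUnion_union]
    exact union_subset_union h𝒰.2 h𝒱.2

theorem biUnion [DecidableEq (Set X)] {ι : Type*} {s : Finset ι} {𝒰 : ι → Finset (Set X)}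
    {E : ι → Set X} (h : ∀ i ∈ s, IsFineOpenCover r (𝒰 i) (E i)) :
    IsFineOpenCover r (s.biUnion 𝒰) (⋃ i ∈ s, E i) := by
  refine ⟨fun U hU => ?_, iUnion₂_subset fun i hi => ?_⟩
  · obtain ⟨i, hi, hU⟩ := Finset.mem_biUnion.1 hU
    exact (h i hi).1 U hU
  · refine (h i hi).2.trans (sUnion_subset_sUnion ?_)
    exact_mod_cast Finset.subset_biUnion_of_mem 𝒰 hi

end IsFineOpenCover

theorem isFineOpenCover_ball (x : X) (hr : 0 ≤ r) :
    IsFineOpenCover r {ball x (r / 2)} (ball x (r / 2)) := by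
  refine ⟨fun U hU => ?_, by simp⟩
  rw [Finset.mem_singleton.1 hU]
  exact ⟨isOpen_ball, (diam_ball (by positivity)).trans_eq (by ring)⟩

/-- Balls of radius `r / 2` centred at the images of the grid `a + k r / 2`. -/
theorem LipschitzWith.exists_isFineOpenCover_image_Icc {f : ℝ → X} (hf : LipschitzWith 1 f)
    {a b : ℝ} (hab : a ≤ b) (hr : 0 < r) :
    ∃ 𝒰 : Finset (Set X), IsFineOpenCover r 𝒰 (f '' Icc a b) ∧
      (𝒰.card : ℝ) ≤ 2 * (b - a) / r + 1 := by
  classical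
  set n := ⌊(b - a) / (r / 2)⌋₊
  refine ⟨(Finset.range (n + 1)).image fun k : ℕ => ball (f (a + k * (r / 2))) (r / 2),
    ⟨?_, ?_⟩, ?_⟩
  · intro U hU
    obtain ⟨k, -, rfl⟩ := Finset.mem_image.1 hU
    exact (isFineOpenCover_ball _ hr.le).1 _ (Finset.mem_singleton_self _)
  · rintro _ ⟨t, ⟨hat, htb⟩, rfl⟩
    have hr2 : 0 < r / 2 := half_pos hr
    set k := ⌊(t - a) / (r / 2)⌋₊
    have hk : k * (r / 2) ≤ t - a := by
      simpa [le_div_iff₀ hr2] using Nat.floor_le (div_nonneg (sub_nonneg.2 hat) hr2.le)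
    have hk' : t - a < (k + 1) * (r / 2) := by
      rw [← div_lt_iff₀ hr2]
      exact Nat.lt_floor_add_one _
    have hkn : k < n + 1 :=
      Nat.lt_succ_of_le (Nat.floor_le_floor (by gcongr))
    refine mem_sUnion.2
      ⟨_, Finset.mem_coe.2 (Finset.mem_image_of_mem _ (Finset.mem_range.2 hkn)), ?_⟩
    calc dist (f t) (f (a + k * (r / 2))) ≤ dist t (a + k * (r / 2)) := by
          simpa using hf.dist_le_mul t (a + k * (r / 2))
      _ < r / 2 := by
          rw [Real.dist_eq, abs_lt]
          constructor <;> linarith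
  · have hcard : (((Finset.range (n + 1)).image
        fun k : ℕ => ball (f (a + k * (r / 2))) (r / 2)).card : ℝ) ≤ n + 1 := by
      exact_mod_cast Finset.card_image_le.trans (Finset.card_range _).le
    have hn : (n : ℝ) ≤ 2 * (b - a) / r :=
      calc (n : ℝ) ≤ (b - a) / (r / 2) :=
            Nat.floor_le (div_nonneg (sub_nonneg.2 hab) (half_pos hr).le)
        _ = 2 * (b - a) / r := by ring
    linarith

end FineCover

theorem sum_one_div_two_pow_le {s : Finset ℕ} {c : ℝ} (hc : 0 ≤ c)
    (h : ∀ j ∈ s, 1 / 2 ^ j ≤ c) : ∑ j ∈ s, (1 : ℝ) / 2 ^ j ≤ 2 * c := by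
  rcases s.eq_empty_or_nonempty with rfl | hs
  · simpa using hc
  set m := s.min' hs
  have hsub : s ⊆ Finset.Ico m (s.max' hs + 1) := fun j hj =>
    Finset.mem_Ico.2 ⟨s.min'_le j hj, Nat.lt_succ_of_le (s.le_max' j hj)⟩
  calc ∑ j ∈ s, (1 : ℝ) / 2 ^ j ≤ ∑ j ∈ Finset.Ico m (s.max' hs + 1), (1 / 2 : ℝ) ^ j := by
        simp_rw [one_div_pow]
        exact Finset.sum_le_sum_of_subset_of_nonneg hsub fun _ _ _ => by positivity
    _ ≤ (1 / 2) ^ m / (1 - 1 / 2) := geom_sum_Ico_le_of_lt_one (by norm_num) (by norm_num)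
    _ = 2 * (1 / 2 ^ m) := by rw [one_div_pow]; ring
    _ ≤ 2 * c := by linarith [h m (s.min'_mem hs)]

theorem sum_one_div_two_pow_div_add_one_le {s : Finset ℕ} {r R : ℝ} (hr : 0 < r) (hR : 0 ≤ R)
    (hs : ∀ j ∈ s, r / 4 ≤ 1 / 2 ^ j ∧ 1 / 2 ^ j ≤ 2 * R) :
    ∑ j ∈ s, (1 / 2 ^ j / r + 1) ≤ 20 * (R / r) :=
  calc ∑ j ∈ s, (1 / 2 ^ j / r + 1) ≤ ∑ j ∈ s, 5 / r * (1 / 2 ^ j) := by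
        gcongr with j hj
        have : 1 ≤ 4 * (1 / 2 ^ j) / r := by rw [le_div_iff₀ hr]; linarith [(hs j hj).1]
        calc 1 / 2 ^ j / r + 1 ≤ 1 / 2 ^ j / r + 4 * (1 / 2 ^ j) / r := by gcongr
          _ = 5 / r * (1 / 2 ^ j) := by ring
    _ ≤ 5 / r * (2 * (2 * R)) := by
        rw [← Finset.mul_sum]
        gcongr
        exact sum_one_div_two_pow_le (by positivity) fun j hj => (hs j hj).2
    _ = 20 * (R / r) := by ring

theorem lipschitzWith_smul_add {E : Type*} [NormedAddCommGroup E] [NormedSpace ℝ E] {v : E}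
    (hv : ‖v‖ ≤ 1) (x : E) : LipschitzWith 1 fun t : ℝ => t • v + x :=
  LipschitzWith.of_dist_le_mul fun s t => by
    rw [dist_eq_norm, add_sub_add_right_eq_sub, ← sub_smul, norm_smul, ← dist_eq_norm,
      NNReal.coe_one, one_mul]
    exact mul_le_of_le_one_right dist_nonneg hv

theorem norm_stdE₁ {d : ℕ} (hd : d ≠ 0) : ‖stdE₁ d‖ = 1 := by
  have : stdE₁ d = EuclideanSpace.single (⟨0, Nat.pos_of_ne_zero hd⟩ : Fin d) (1 : ℝ) := by
    ext i
    simp [stdE₁, Fin.ext_iff]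
  simp [this]

section Kset

variable {d : ℕ} {ξ : ℕ → EuclideanSpace ℝ (Fin d)} {j : ℕ}

theorem exists_isFineOpenCover_Tseg (hξ : ‖ξ j‖ ≤ 1) {r : ℝ} (hr : 0 < r) :
    ∃ 𝒰 : Finset (Set (EuclideanSpace ℝ (Fin d))), IsFineOpenCover r 𝒰 (Tseg ξ j) ∧
      (𝒰.card : ℝ) ≤ 1 / 2 ^ j / r + 1 := by
  obtain ⟨𝒰, h𝒰, hcard⟩ :=
    (lipschitzWith_smul_add hξ ((1 / 2 ^ j : ℝ) • stdE₁ d)).exists_isFineOpenCover_image_Icc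
      (neg_le_self (by positivity) : -((1 : ℝ) / 2 ^ (j + 2)) ≤ 1 / 2 ^ (j + 2)) hr
  refine ⟨𝒰, h𝒰, hcard.trans_eq ?_⟩
  rw [pow_add]
  ring

theorem abs_norm_sub_le_of_mem_Tseg (hd : d ≠ 0) (hξ : ‖ξ j‖ ≤ 1)
    {x : EuclideanSpace ℝ (Fin d)} (hx : x ∈ Tseg ξ j) : |‖x‖ - 1 / 2 ^ j| ≤ 1 / 2 ^ j / 4 := by
  obtain ⟨t, ht, rfl⟩ := hx
  have hcentre : ‖(1 / 2 ^ j : ℝ) • stdE₁ d‖ = 1 / 2 ^ j := by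
    rw [norm_smul, norm_stdE₁ hd, mul_one, Real.norm_of_nonneg (by positivity)]
  calc |‖t • ξ j + (1 / 2 ^ j : ℝ) • stdE₁ d‖ - 1 / 2 ^ j|
      = |‖t • ξ j + (1 / 2 ^ j : ℝ) • stdE₁ d‖ - ‖(1 / 2 ^ j : ℝ) • stdE₁ d‖| := by
        rw [hcentre]
    _ ≤ ‖t • ξ j + (1 / 2 ^ j : ℝ) • stdE₁ d - (1 / 2 ^ j : ℝ) • stdE₁ d‖ :=
        abs_norm_sub_norm_le _ _
    _ ≤ |t| := by
        rw [add_sub_cancel_right, norm_smul, Real.norm_eq_abs]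
        exact mul_le_of_le_one_right (abs_nonneg t) hξ
    _ ≤ 1 / 2 ^ (j + 2) := abs_le.2 ht
    _ = 1 / 2 ^ j / 4 := by rw [pow_add]; ring

theorem closedBall_inter_Kset_subset (hd : d ≠ 0) (hξ : ∀ j, ‖ξ j‖ ≤ 1) {R r : ℝ} {n : ℕ}
    (hn : 1 / 2 ^ n < r / 4) :
    closedBall 0 R ∩ Kset ξ ⊆ ball 0 (r / 2) ∪
      ⋃ j ∈ (Finset.range n).filter (fun j => r / 4 ≤ 1 / 2 ^ j ∧ 1 / 2 ^ j ≤ 2 * R),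
        Tseg ξ j := by
  have hr : 0 < r := by linarith [show (0 : ℝ) < 1 / 2 ^ n by positivity]
  rintro x ⟨hxR, hx | hx⟩
  · rw [mem_singleton_iff.1 hx]
    exact Or.inl (mem_ball_self (half_pos hr))
  obtain ⟨j, hxj⟩ := mem_iUnion.1 hx
  have hnorm := abs_le.1 (abs_norm_sub_le_of_mem_Tseg hd (hξ j) hxj)
  by_cases hnear : 1 / 2 ^ j < r / 4
  · left
    rw [mem_ball_zero_iff]
    linarith
  right
  have hjn : j < n := by
    by_contra! hnj
    have : (1 : ℝ) / 2 ^ j ≤ 1 / 2 ^ n := by gcongr; norm_num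
    linarith
  have hfar : (1 : ℝ) / 2 ^ j ≤ 2 * R := by
    rw [mem_closedBall_zero_iff] at hxR
    linarith
  exact mem_biUnion (Finset.mem_filter.2 ⟨Finset.mem_range.2 hjn, not_lt.1 hnear, hfar⟩) hxj

end Kset

/-- For any sequence of unit vectors `ξ_j` in `ℝ^d` (`d ≥ 2`), there is `C > 0`
with `N(B(0,R) ∩ K, r) ≤ C·R/r` for all `0 < r < R`, where `K = {0} ∪ ⋃_j T_j`. -/
theorem Kset_coverNumber_at_origin_le (d : ℕ) (hd : 2 ≤ d)
    (ξ : ℕ → EuclideanSpace ℝ (Fin d)) (hξ : ∀ j, ‖ξ j‖ = 1) :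
    ∃ C > (0 : ℝ), ∀ R > (0 : ℝ), ∀ r ∈ Set.Ioo 0 R,
      (coverNumber (Metric.closedBall (0 : EuclideanSpace ℝ (Fin d)) R ∩ Kset ξ) r : ℝ)
        ≤ C * (R / r) := by
  classical
  refine ⟨21, by norm_num, fun R hR r ⟨hr, hrR⟩ => ?_⟩
  have hξ' : ∀ j, ‖ξ j‖ ≤ 1 := fun j => (hξ j).le
  obtain ⟨n, hn⟩ : ∃ n : ℕ, 1 / 2 ^ n < r / 4 := by
    simpa only [one_div_pow] using
      exists_pow_lt_of_lt_one (by positivity) (by norm_num : (1 / 2 : ℝ) < 1)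
  set s := (Finset.range n).filter (fun j => r / 4 ≤ 1 / 2 ^ j ∧ (1 : ℝ) / 2 ^ j ≤ 2 * R)
  choose 𝒰 h𝒰 hcard using fun j => exists_isFineOpenCover_Tseg (hξ' j) hr
  have hcover : IsFineOpenCover r ({ball 0 (r / 2)} ∪ s.biUnion 𝒰) (closedBall 0 R ∩ Kset ξ) :=
    ((isFineOpenCover_ball 0 hr.le).union (IsFineOpenCover.biUnion fun j _ => h𝒰 j)).mono
      (closedBall_inter_Kset_subset (by omega) hξ' hn)
  calc (coverNumber (closedBall 0 R ∩ Kset ξ) r : ℝ)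
      ≤ 1 + ∑ j ∈ s, ((𝒰 j).card : ℝ) := by
        have := (coverNumber_le_card hcover).trans (Finset.card_union_le _ _)
        rw [Finset.card_singleton] at this
        exact_mod_cast this.trans (Nat.add_le_add_left Finset.card_biUnion_le 1)
    _ ≤ 1 + ∑ j ∈ s, (1 / 2 ^ j / r + 1) := by gcongr with j; exact hcard j
    _ ≤ 1 + 20 * (R / r) := by
        gcongr
        exact sum_one_div_two_pow_div_add_one_le hr hR.le fun j hj => (Finset.mem_filter.1 hj).2
    _ ≤ 21 * (R / r) := by linarith [(one_le_div hr).2 hrR.le]
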